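/- arXiv:2007.01199 — 2 statements merged into one kernel-verified Lean document; each statement's English description precedes it below -/
import Mathlib

section
/- Let s be a nonempty finite multiset of natural numbers with maximum m. Then for every natural number x: if m occurs exactly once in s (with multiplicity), then L(x ::ₘ s) = f_m^≠(x), and otherwise L(x ::ₘ s) = g_m^=(x). (Hence the family of functions {f_i^≠, g_i^=} is closed under projection with respect to the layer-combination operation L.) -/
/-- `f_i^≠(x) = i + 1` if `x = i`, and `max i x` otherwise. -/
def fNe (i x : ℕ) : ℕ := if x = i then i + 1 else max i x

/-- `g_i^=(x) = i + 1` if `i ≥ x`, and `x` if `i < x`. -/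
def gEq (i x : ℕ) : ℕ := if x ≤ i then i + 1 else x

/-- The layer-combination operation: `L t` is the maximum of the multiset `t` if it
occurs exactly once in `t` (with multiplicity), and the maximum plus one otherwise. -/
def L (t : Multiset ℕ) : ℕ := if t.count t.sup = 1 then t.sup else t.sup + 1

lemma sup_mem_of_ne_zero (s : Multiset ℕ) (hs : s ≠ 0) : s.sup ∈ s := by
  induction s using Multiset.induction with
  | empty => simp at hs
  | cons a t ih =>
    rcases eq_or_ne t 0 with rfl | ht
    · simp
    · rw [Multiset.sup_cons]
      rcases le_total a t.sup with h | h
      · rw [sup_eq_right.2 h]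
        exact Multiset.mem_cons_of_mem (ih ht)
      · rw [sup_eq_left.2 h]
        exact Multiset.mem_cons_self a _

/-- Let `s` be a nonempty multiset of naturals with maximum `m`. If `m` occurs exactly
once in `s`, then `L (x ::ₘ s) = f_m^≠(x)`; otherwise `L (x ::ₘ s) = g_m^=(x)`. -/
theorem stmt13 (s : Multiset ℕ) (hs : s ≠ 0) (m : ℕ) (hm : m = s.sup) (x : ℕ) :
    (s.count m = 1 → L (x ::ₘ s) = fNe m x) ∧
    (s.count m ≠ 1 → L (x ::ₘ s) = gEq m x) := by
  have hmem : m ∈ s := hm ▸ sup_mem_of_ne_zero s hs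
  have hc1 : 1 ≤ s.count m := Multiset.one_le_count_iff_mem.2 hmem
  have hsup : (x ::ₘ s).sup = max x m := by rw [Multiset.sup_cons, hm]
  constructor
  · intro h1
    rcases eq_or_ne x m with rfl | hne
    · have : (x ::ₘ s).sup = x := by simp [hsup]
      simp [L, fNe, this, Multiset.count_cons_self, h1]
    · rcases lt_or_gt_of_ne hne with hlt | hgt
      · have hsx : (x ::ₘ s).sup = m := by simp [hsup, hlt.le]
        rw [L, hsx, Multiset.count_cons_of_ne (Ne.symm hne), h1]
        simp [fNe, hne, max_eq_left hlt.le]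
      · have hsx : (x ::ₘ s).sup = x := by simp [hsup, hgt.le]
        have hxs : x ∉ s := fun hx => absurd (hm ▸ Multiset.le_sup hx) (not_le.2 hgt)
        rw [L, hsx, Multiset.count_cons_self, Multiset.count_eq_zero.2 hxs]
        simp [fNe, hne, max_eq_right hgt.le]
  · intro h1
    have h2 : 2 ≤ s.count m := by omega
    rcases le_or_gt x m with hle | hgt
    · have hsx : (x ::ₘ s).sup = m := by simp [hsup, hle]
      rw [L, hsx]
      have : ¬ (x ::ₘ s).count m = 1 := by
        rcases eq_or_ne x m with rfl | hne
        · rw [Multiset.count_cons_self]; omega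
        · rw [Multiset.count_cons_of_ne (Ne.symm hne)]; omega
      simp [this, gEq, hle]
    · have hsx : (x ::ₘ s).sup = x := by simp [hsup, hgt.le]
      have hxs : x ∉ s := fun hx => absurd (hm ▸ Multiset.le_sup hx) (not_le.2 hgt)
      rw [L, hsx, Multiset.count_cons_self, Multiset.count_eq_zero.2 hxs]
      simp [gEq, not_le.2 hgt]
end

section
/- Let a finite rooted tree with layer function l be given. Then for every vertex v, the number of leaves that are descendants of v is at least 2^{l(v)}. Consequently, if the tree has n vertices, then l(v) ≤ log₂ n for every vertex v, so the layer function takes at most ⌊log₂ n⌋ + 1 distinct values. -/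
/-- A finite rooted tree: a finite vertex type, a root, and a parent map fixing
the root, such that every vertex reaches the root by iterating the parent map. -/
structure FinRootedTree (V : Type*) where
  root : V
  parent : V → V
  parent_root : parent root = root
  reaches_root : ∀ v : V, ∃ n : ℕ, parent^[n] v = root

variable {V : Type*} [Fintype V] [DecidableEq V]

/-- The children of `v`: the vertices other than the root whose parent is `v`. -/
def FinRootedTree.children (T : FinRootedTree V) (v : V) : Finset V :=
  Finset.univ.filter fun u => u ≠ T.root ∧ T.parent u = v

/-- `l` is a layer function: leaves have layer `0`, and a non-leaf `v` has layer equal to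
the maximum `M` of the layers of its children if exactly one child attains `M`, and
`M + 1` otherwise. -/
def FinRootedTree.IsLayerFun (T : FinRootedTree V) (l : V → ℕ) : Prop :=
  (∀ v : V, T.children v = ∅ → l v = 0) ∧
  ∀ (v : V) (h : (T.children v).Nonempty),
    l v = if ((T.children v).filter fun c => l c = (T.children v).sup' h l).card = 1
      then (T.children v).sup' h l
      else (T.children v).sup' h l + 1


/-!
Induct on the number of descendants. If a single child `c` of `v` attains the maximal layer
`M`, then `l v = l c` and the leaves below `c` lie below `v`. Otherwise two distinct children
both have layer `M`; their subtrees are disjoint, so `v` has at least `2 ^ M + 2 ^ M` leaf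
descendants. Since there are at most `n` leaves, `2 ^ l v ≤ n`.
-/

open Function

namespace FinRootedTree

section Descendants

variable {α : Type*} (T : FinRootedTree α)

def descendants (v : α) : Set α :=
  {u | ∃ n, T.parent^[n] u = v}

/-- A periodic point returns to itself after any multiple of its period, in particular after
it has reached the fixed point `T.root`. -/
lemma eq_root_of_iterate_eq_self {k : ℕ} (hk : 0 < k) {u : α} (h : T.parent^[k] u = u) :
    u = T.root := by
  obtain ⟨N, hN⟩ := T.reaches_root u
  have hper : T.parent^[k * N] u = u := IsPeriodicPt.mul_const h N
  calc u = T.parent^[k * N - N] (T.parent^[N] u) := by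
        rw [← iterate_add_apply, Nat.sub_add_cancel (Nat.le_mul_of_pos_left N hk), hper]
    _ = T.root := by rw [hN, iterate_fixed T.parent_root]

variable {T}

lemma mem_descendants_self (v : α) : v ∈ T.descendants v :=
  ⟨0, rfl⟩

lemma descendants_subset_of_mem {u v : α} (h : u ∈ T.descendants v) :
    T.descendants u ⊆ T.descendants v := by
  rintro w ⟨m, rfl⟩
  obtain ⟨n, rfl⟩ := h
  exact ⟨n + m, iterate_add_apply _ _ _ _⟩

lemma eq_of_mem_descendants_of_mem_descendants {u v : α} (huv : u ∈ T.descendants v)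
    (hvu : v ∈ T.descendants u) : u = v := by
  obtain ⟨n, hn⟩ := huv
  obtain ⟨m, hm⟩ := hvu
  rcases n.eq_zero_or_pos with rfl | hn_pos
  · exact hn
  · have hu : u = T.root :=
      T.eq_root_of_iterate_eq_self (k := m + n) (by omega) (by rw [iterate_add_apply, hn, hm])
    rw [← hn, hu, iterate_fixed T.parent_root]

lemma mem_descendants_or_mem_descendants {u a b : α} (ha : u ∈ T.descendants a)
    (hb : u ∈ T.descendants b) : a ∈ T.descendants b ∨ b ∈ T.descendants a := by
  obtain ⟨n, rfl⟩ := ha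
  obtain ⟨m, rfl⟩ := hb
  rcases le_total n m with h | h
  · exact Or.inl ⟨m - n, by rw [← iterate_add_apply, Nat.sub_add_cancel h]⟩
  · exact Or.inr ⟨n - m, by rw [← iterate_add_apply, Nat.sub_add_cancel h]⟩

lemma parent_mem_descendants {u v : α} (h : u ∈ T.descendants v) (hne : u ≠ v) :
    T.parent u ∈ T.descendants v := by
  obtain ⟨_ | n, hn⟩ := h
  · exact absurd hn hne
  · exact ⟨n, hn⟩

lemma parent_notMem_descendants {u : α} (hu : u ≠ T.root) :
    T.parent u ∉ T.descendants u := fun h =>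
  hu <| T.eq_root_of_iterate_eq_self one_pos
    (eq_of_mem_descendants_of_mem_descendants ⟨1, rfl⟩ h).symm

end Descendants

variable (T : FinRootedTree V)

def leafDescendants (v : V) : Set V :=
  {u | u ∈ T.descendants v ∧ T.children u = ∅}

variable {T}

lemma mem_children {u v : V} : u ∈ T.children v ↔ u ≠ T.root ∧ T.parent u = v := by
  simp [children]

lemma descendants_ssubset_of_mem_children {c v : V} (hc : c ∈ T.children v) :
    T.descendants c ⊂ T.descendants v := by
  obtain ⟨hc_root, rfl⟩ := mem_children.1 hc
  exact ⟨descendants_subset_of_mem ⟨1, rfl⟩,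
    fun h => parent_notMem_descendants hc_root (h (mem_descendants_self _))⟩

lemma leafDescendants_subset_of_mem_children {c v : V} (hc : c ∈ T.children v) :
    T.leafDescendants c ⊆ T.leafDescendants v :=
  fun _ hu => ⟨(descendants_ssubset_of_mem_children hc).subset hu.1, hu.2⟩

lemma disjoint_descendants_of_mem_children {c₁ c₂ v : V} (h₁ : c₁ ∈ T.children v)
    (h₂ : c₂ ∈ T.children v) (hne : c₁ ≠ c₂) :
    Disjoint (T.descendants c₁) (T.descendants c₂) := by
  obtain ⟨h₁_root, hp₁⟩ := mem_children.1 h₁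
  obtain ⟨h₂_root, hp₂⟩ := mem_children.1 h₂
  refine Set.disjoint_left.2 fun u hu₁ hu₂ => ?_
  rcases mem_descendants_or_mem_descendants hu₁ hu₂ with h | h
  · have := parent_mem_descendants h hne
    rw [hp₁, ← hp₂] at this
    exact parent_notMem_descendants h₂_root this
  · have := parent_mem_descendants h hne.symm
    rw [hp₂, ← hp₁] at this
    exact parent_notMem_descendants h₁_root this

namespace IsLayerFun

variable {l : V → ℕ}

lemma eq_child_or_eq_two_children_add_one (hl : T.IsLayerFun l) {v : V}
    (hv : (T.children v).Nonempty) :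
    (∃ c ∈ T.children v, l v = l c) ∨
      ∃ c₁ ∈ T.children v, ∃ c₂ ∈ T.children v, c₁ ≠ c₂ ∧ l v = l c₁ + 1 ∧ l v = l c₂ + 1 := by
  obtain ⟨c, hc, hc_max⟩ := Finset.exists_mem_eq_sup' hv l
  rw [hl.2 v hv]
  split_ifs with h_unique
  · exact Or.inl ⟨c, hc, hc_max⟩
  · set S := (T.children v).filter fun c => l c = (T.children v).sup' hv l
    have h_pos : 0 < S.card := Finset.card_pos.2 ⟨c, Finset.mem_filter.2 ⟨hc, hc_max.symm⟩⟩
    obtain ⟨c₁, h₁, c₂, h₂, hne⟩ := Finset.one_lt_card.1 (by omega : 1 < S.card)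
    rw [Finset.mem_filter] at h₁ h₂
    exact Or.inr ⟨c₁, h₁.1, c₂, h₂.1, hne, by rw [h₁.2], by rw [h₂.2]⟩

theorem two_pow_le_ncard_leafDescendants (hl : T.IsLayerFun l) (v : V) :
    2 ^ l v ≤ (T.leafDescendants v).ncard := by
  rcases (T.children v).eq_empty_or_nonempty with h_leaf | hv
  · rw [hl.1 v h_leaf, pow_zero]
    exact (Set.ncard_pos).2 ⟨v, mem_descendants_self v, h_leaf⟩
  rcases hl.eq_child_or_eq_two_children_add_one hv with
    ⟨c, hc, hlc⟩ | ⟨c₁, hc₁, c₂, hc₂, hne, hl₁, hl₂⟩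
  · calc 2 ^ l v = 2 ^ l c := by rw [hlc]
      _ ≤ (T.leafDescendants c).ncard := two_pow_le_ncard_leafDescendants hl c
      _ ≤ (T.leafDescendants v).ncard :=
        Set.ncard_le_ncard (leafDescendants_subset_of_mem_children hc)
  · have h_disj : Disjoint (T.leafDescendants c₁) (T.leafDescendants c₂) :=
      (disjoint_descendants_of_mem_children hc₁ hc₂ hne).mono
        (fun _ hu => hu.1) (fun _ hu => hu.1)
    calc 2 ^ l v = 2 ^ l c₁ + 2 ^ l c₂ := by
          rw [hl₁, show l c₂ = l c₁ by omega, pow_succ, mul_two]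
      _ ≤ (T.leafDescendants c₁).ncard + (T.leafDescendants c₂).ncard :=
        add_le_add (two_pow_le_ncard_leafDescendants hl c₁)
          (two_pow_le_ncard_leafDescendants hl c₂)
      _ = (T.leafDescendants c₁ ∪ T.leafDescendants c₂).ncard :=
        (Set.ncard_union_eq h_disj).symm
      _ ≤ (T.leafDescendants v).ncard :=
        Set.ncard_le_ncard (Set.union_subset (leafDescendants_subset_of_mem_children hc₁)
          (leafDescendants_subset_of_mem_children hc₂))
termination_by (T.descendants v).ncard
decreasing_by all_goals exact Set.ncard_lt_ncard (descendants_ssubset_of_mem_children ‹_›)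

end IsLayerFun

end FinRootedTree

/-- For a layer function `l` on a finite rooted tree, every vertex `v` has at least
`2 ^ (l v)` leaf descendants. Consequently `l v ≤ log₂ n` for a tree on `n` vertices,
so `l` takes at most `⌊log₂ n⌋ + 1` distinct values. -/
theorem stmt14 (T : FinRootedTree V) (l : V → ℕ) (hl : T.IsLayerFun l) :
    (∀ v : V,
      2 ^ l v ≤ Set.ncard {u : V | (∃ n : ℕ, T.parent^[n] u = v) ∧ T.children u = ∅}) ∧
    (∀ v : V, l v ≤ Nat.log 2 (Fintype.card V)) ∧
    (Finset.univ.image l).card ≤ Nat.log 2 (Fintype.card V) + 1 := by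
  have h_leaves : ∀ v, 2 ^ l v ≤ (T.leafDescendants v).ncard :=
    hl.two_pow_le_ncard_leafDescendants
  have h_log : ∀ v, l v ≤ Nat.log 2 (Fintype.card V) := fun v =>
    Nat.le_log_of_pow_le one_lt_two <|
      (h_leaves v).trans <| (Set.ncard_le_card _).trans_eq Nat.card_eq_fintype_card
  refine ⟨h_leaves, h_log, ?_⟩
  calc (Finset.univ.image l).card ≤ (Finset.range (Nat.log 2 (Fintype.card V) + 1)).card :=
        Finset.card_le_card <| Finset.image_subset_iff.2 fun v _ =>
          Finset.mem_range.2 (Nat.lt_succ_of_le (h_log v))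
    _ = Nat.log 2 (Fintype.card V) + 1 := Finset.card_range _
end
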